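/- Let X be a real Banach space of dimension at least 2. If (2·L_X(t) − 1)/(1 − 2t) → 0 as t → (1/2)⁻, then X is uniformly smooth, i.e. ρ_X(s)/s → 0 as s → 0⁺. -/

import Mathlib

/-- The geometric constant L_X(t) defined via isosceles orthogonality. -/
noncomputable def LX (X : Type*) [NormedAddCommGroup X] [NormedSpace ℝ X] (t : ℝ) : ℝ :=
  sSup {r : ℝ | ∃ x y : X, (x, y) ≠ (0, 0) ∧ ‖x + y‖ = ‖x - y‖ ∧
    r = (‖t • x + (1 - t) • y‖ ^ 2 + ‖(1 - t) • x + t • y‖ ^ 2) / ‖x + y‖ ^ 2}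

/-- The modulus of smoothness. -/
noncomputable def rhoX (X : Type*) [NormedAddCommGroup X] [NormedSpace ℝ X] (s : ℝ) : ℝ :=
  sSup {r : ℝ | ∃ x y : X, ‖x‖ = 1 ∧ ‖y‖ = 1 ∧ r = (‖x + s • y‖ + ‖x - s • y‖) / 2 - 1}

/-!
For unit vectors `x, y` the pair `(x + y, x - y)` is isosceles orthogonal, and at
`t = (1 - s) / 2` the two combinations in the definition of `L_X(t)` become `x - s • y` and
`x + s • y`, while `‖(x + y) + (x - y)‖ = 2`. Hence `(‖x + s • y‖² + ‖x - s • y‖²) / 4 ≤ L_X(t)`,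
and together with `L_X(t) ≥ 1/2` this gives `0 ≤ ρ_X(s) ≤ 2 L_X((1 - s)/2) - 1`. Dividing by
`s = 1 - 2t` squeezes `ρ_X(s) / s` between `0` and a quantity tending to `0`.
-/

open Filter Set Topology

section Moduli

variable {X : Type*} [NormedAddCommGroup X] [NormedSpace ℝ X]

lemma two_mul_norm_le_norm_add_add_norm_sub (x y : X) : 2 * ‖x‖ ≤ ‖x + y‖ + ‖x - y‖ := by
  calc 2 * ‖x‖ = ‖(x + y) + (x - y)‖ := by
        rw [show (x + y) + (x - y) = (2 : ℝ) • x by module, norm_smul, Real.norm_two]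
    _ ≤ ‖x + y‖ + ‖x - y‖ := norm_add_le _ _

lemma norm_le_norm_add_of_norm_add_eq_norm_sub {x y : X} (h : ‖x + y‖ = ‖x - y‖) :
    ‖x‖ ≤ ‖x + y‖ := by
  linarith [two_mul_norm_le_norm_add_add_norm_sub x y]

lemma LX_ratio_le {x y : X} (h : ‖x + y‖ = ‖x - y‖) (t : ℝ) :
    (‖t • x + (1 - t) • y‖ ^ 2 + ‖(1 - t) • x + t • y‖ ^ 2) / ‖x + y‖ ^ 2
      ≤ 2 * (|t| + |1 - t|) ^ 2 := by
  have hx : ‖x‖ ≤ ‖x + y‖ := norm_le_norm_add_of_norm_add_eq_norm_sub h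
  have hy : ‖y‖ ≤ ‖x + y‖ := by
    rw [add_comm]
    exact norm_le_norm_add_of_norm_add_eq_norm_sub (by rw [add_comm, h, norm_sub_rev])
  have bound : ∀ a b : ℝ, ‖a • x + b • y‖ ≤ (|a| + |b|) * ‖x + y‖ := fun a b =>
    calc ‖a • x + b • y‖ ≤ |a| * ‖x‖ + |b| * ‖y‖ := by
          simpa only [norm_smul, Real.norm_eq_abs] using norm_add_le (a • x) (b • y)
      _ ≤ (|a| + |b|) * ‖x + y‖ := by nlinarith [abs_nonneg a, abs_nonneg b]
  have h₁ := pow_le_pow_left₀ (norm_nonneg _) (bound t (1 - t)) 2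
  have h₂ := pow_le_pow_left₀ (norm_nonneg _) (bound (1 - t) t) 2
  rw [add_comm |1 - t|] at h₂
  rcases (norm_nonneg (x + y)).eq_or_lt with hc | hc
  · rw [← hc]
    simp only [ne_eq, OfNat.ofNat_ne_zero, not_false_eq_true, zero_pow, div_zero]
    positivity
  · rw [div_le_iff₀ (by positivity)]
    nlinarith

lemma le_LX {x y : X} (hxy : (x, y) ≠ (0, 0)) (h : ‖x + y‖ = ‖x - y‖) (t : ℝ) :
    (‖t • x + (1 - t) • y‖ ^ 2 + ‖(1 - t) • x + t • y‖ ^ 2) / ‖x + y‖ ^ 2 ≤ LX X t :=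
  le_csSup ⟨2 * (|t| + |1 - t|) ^ 2, by rintro _ ⟨x, y, -, h, rfl⟩; exact LX_ratio_le h t⟩
    ⟨x, y, hxy, h, rfl⟩

lemma one_half_le_LX [Nontrivial X] (t : ℝ) : 1 / 2 ≤ LX X t := by
  obtain ⟨x, hx⟩ := exists_ne (0 : X)
  have hx' : ‖x‖ ≠ 0 := norm_ne_zero_iff.mpr hx
  have h := le_LX (x := x) (y := 0) (by simp [hx]) (by simp) t
  simp only [smul_zero, add_zero, norm_smul, Real.norm_eq_abs, mul_pow, sq_abs] at h
  rw [← add_mul, mul_div_assoc, div_self (pow_ne_zero 2 hx'), mul_one] at h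
  nlinarith [sq_nonneg (2 * t - 1)]

lemma rhoX_nonneg (s : ℝ) : 0 ≤ rhoX X s := by
  refine Real.sSup_nonneg ?_
  rintro _ ⟨x, y, hx, -, rfl⟩
  have := two_mul_norm_le_norm_add_add_norm_sub x (s • y)
  rw [hx] at this
  linarith

lemma le_LX_of_norm_eq_one {x y : X} (hx : ‖x‖ = 1) (hy : ‖y‖ = 1) (s : ℝ) :
    (‖x + s • y‖ ^ 2 + ‖x - s • y‖ ^ 2) / 4 ≤ LX X ((1 - s) / 2) := by
  have hxy : (x + y, x - y) ≠ (0, 0) := by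
    intro h
    obtain ⟨hplus, hminus⟩ := Prod.mk.inj h
    have h2x : (2 : ℝ) • x = 0 := by
      rw [show (2 : ℝ) • x = (x + y) + (x - y) by module, hplus, hminus, add_zero]
    simp_all
  have hiso : ‖(x + y) + (x - y)‖ = ‖(x + y) - (x - y)‖ := by
    rw [show (x + y) + (x - y) = (2 : ℝ) • x by module,
      show (x + y) - (x - y) = (2 : ℝ) • y by module, norm_smul, norm_smul, hx, hy]
  have h := le_LX hxy hiso ((1 - s) / 2)
  rw [show ((1 - s) / 2) • (x + y) + (1 - (1 - s) / 2) • (x - y) = x - s • y by module,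
    show (1 - (1 - s) / 2) • (x + y) + ((1 - s) / 2) • (x - y) = x + s • y by module,
    show (x + y) + (x - y) = (2 : ℝ) • x by module, norm_smul, hx, Real.norm_two, add_comm] at h
  norm_num at h
  exact h

lemma rhoX_le_two_mul_LX_sub_one [Nontrivial X] (s : ℝ) :
    rhoX X s ≤ 2 * LX X ((1 - s) / 2) - 1 := by
  obtain ⟨x, hx⟩ := exists_norm_eq X zero_le_one
  refine csSup_le ⟨_, x, x, hx, hx, rfl⟩ ?_
  rintro _ ⟨x, y, hx, hy, rfl⟩
  have hL := le_LX_of_norm_eq_one hx hy s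
  have hhalf := one_half_le_LX (X := X) ((1 - s) / 2)
  -- `m ≤ max (m², 1)` for `m = (‖x + s • y‖ + ‖x - s • y‖) / 2`, and `m² ≤ 2 L_X`
  nlinarith [sq_nonneg (‖x + s • y‖ - ‖x - s • y‖), sq_nonneg (‖x + s • y‖ + ‖x - s • y‖ - 2),
    norm_nonneg (x + s • y), norm_nonneg (x - s • y)]

end Moduli

lemma tendsto_one_sub_div_two_nhdsGT_zero :
    Tendsto (fun s : ℝ => (1 - s) / 2) (𝓝[>] 0) (𝓝[<] (1 / 2)) := by
  refine tendsto_nhdsWithin_of_tendsto_nhds_of_eventually_within _ ?_ ?_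
  · exact tendsto_nhdsWithin_of_tendsto_nhds
      ((by fun_prop : Continuous fun s : ℝ => (1 - s) / 2).tendsto' 0 (1 / 2) (by norm_num))
  · filter_upwards [self_mem_nhdsWithin] with s (hs : 0 < s)
    simp only [mem_Iio]
    linarith

theorem stmt_19_general (X : Type*) [NormedAddCommGroup X] [NormedSpace ℝ X]
    (hdim : 2 ≤ Module.rank ℝ X)
    (hL : Filter.Tendsto (fun t : ℝ => (2 * LX X t - 1) / (1 - 2 * t))
      (nhdsWithin (1 / 2 : ℝ) (Set.Iio (1 / 2))) (nhds 0)) :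
    Filter.Tendsto (fun s : ℝ => rhoX X s / s)
      (nhdsWithin (0 : ℝ) (Set.Ioi 0)) (nhds 0) := by
  have : Nontrivial X := rank_pos_iff_nontrivial.mp (zero_lt_two.trans_le hdim)
  have hupper : Tendsto (fun s : ℝ => (2 * LX X ((1 - s) / 2) - 1) / s) (𝓝[>] 0) (𝓝 0) :=
    (hL.comp tendsto_one_sub_div_two_nhdsGT_zero).congr fun s => by
      simp only [Function.comp_apply]
      ring_nf
  refine tendsto_of_tendsto_of_tendsto_of_le_of_le' tendsto_const_nhds hupper ?_ ?_
  all_goals filter_upwards [self_mem_nhdsWithin] with s (hs : 0 < s)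
  · exact div_nonneg (rhoX_nonneg s) hs.le
  · exact div_le_div_of_nonneg_right (rhoX_le_two_mul_LX_sub_one s) hs.le

theorem stmt_19 (X : Type*) [NormedAddCommGroup X] [NormedSpace ℝ X] [CompleteSpace X]
    (hdim : 2 ≤ Module.rank ℝ X)
    (hL : Filter.Tendsto (fun t : ℝ => (2 * LX X t - 1) / (1 - 2 * t))
      (nhdsWithin (1 / 2 : ℝ) (Set.Iio (1 / 2))) (nhds 0)) :
    Filter.Tendsto (fun s : ℝ => rhoX X s / s)
      (nhdsWithin (0 : ℝ) (Set.Ioi 0)) (nhds 0) :=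
  stmt_19_general X hdim hL
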